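/- Let P, Q* be symmetric positive definite matrices, let A_k be a matrix satisfying the Lyapunov equation A_kᵀP + PA_k = −Q*, and let φ : ℝⁿ → ℝⁿ. Consider the nonlinear vector field f(x) = A_k x + φ(x). If x ≠ 0 and ‖φ(x)‖_P / ‖x‖_P ≤ λ_min(Q̂_P)/4, where Q̂_P = P^{−1/2} Q* P^{−1/2} and λ_min denotes the smallest eigenvalue, then the Lyapunov derivative satisfies ∇V(x) · f(x) ≤ −(1/2) xᵀQ*x, where V(x) = xᵀPx. -/

import Mathlib

/-!
Write `S = P^{1/2}`, `y = S x` and `z = S φ(x)`. The Lyapunov equation turns the linear part of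
`2 xᵀP f(x)` into `-xᵀQ*x`, and the remainder is `2 ⟪y, z⟫`. By Cauchy–Schwarz and the
smallness hypothesis, `⟪y, z⟫ ≤ (λ/4) ‖y‖²` with `λ = λ_min(Q̂_P)`, while the Rayleigh bound for
`Q̂_P = S⁻¹ Q* S⁻¹` gives `λ ‖y‖² ≤ yᵀQ̂_P y = xᵀQ*x`.
-/

open Matrix

/-- The square root of a positive semidefinite matrix, as formerly defined in Mathlib
(`Matrix.PosSemidef.sqrt`, since removed). -/
noncomputable def Matrix.PosSemidef.sqrt {n : Type*} [Fintype n] [DecidableEq n]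
    {𝕜 : Type*} [RCLike 𝕜] [PartialOrder 𝕜] [StarOrderedRing 𝕜] {A : Matrix n n 𝕜} (hA : A.PosSemidef) : Matrix n n 𝕜 :=
  (hA.1.eigenvectorUnitary : Matrix n n 𝕜) * diagonal ((↑) ∘ (√·) ∘ hA.1.eigenvalues) *
    (star hA.1.eigenvectorUnitary : Matrix n n 𝕜)

open scoped ComplexOrder

namespace Matrix

section Sqrt

variable {n 𝕜 : Type*} [Fintype n] [DecidableEq n] [RCLike 𝕜]

namespace PosSemidef

variable {A : Matrix n n 𝕜} (hA : A.PosSemidef)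

lemma sqrt_eq_cfc : hA.sqrt = cfc Real.sqrt A := by
  rw [hA.1.cfc_eq, IsHermitian.cfc, Unitary.conjStarAlgAut_apply, PosSemidef.sqrt]

lemma sqrt_mul_self : hA.sqrt * hA.sqrt = A := by
  have hspec : ∀ t ∈ spectrum ℝ A, 0 ≤ t := by
    rw [hA.1.spectrum_real_eq_range_eigenvalues]
    rintro _ ⟨i, rfl⟩
    exact hA.eigenvalues_nonneg i
  have hA' : IsSelfAdjoint A := hA.1
  rw [sqrt_eq_cfc, ← cfc_mul Real.sqrt Real.sqrt A,
    cfc_congr fun t ht ↦ Real.mul_self_sqrt (hspec t ht), cfc_id' ℝ A]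

lemma isHermitian_sqrt : hA.sqrt.IsHermitian := by
  rw [sqrt_eq_cfc]
  exact cfc_predicate _ _

end PosSemidef

lemma PosDef.isUnit_sqrt {A : Matrix n n 𝕜} (hA : A.PosDef) : IsUnit hA.posSemidef.sqrt := by
  have h := hA.isUnit
  rw [← hA.posSemidef.sqrt_mul_self] at h
  exact isUnit_of_mul_isUnit_left h

end Sqrt

variable {ι R : Type*} [Fintype ι]

lemma dotProduct_transpose_mul_mulVec [CommSemiring R] (S : Matrix ι ι R) (u v : ι → R) :
    u ⬝ᵥ (Sᵀ * S) *ᵥ v = S *ᵥ u ⬝ᵥ S *ᵥ v := by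
  rw [← mulVec_mulVec, dotProduct_mulVec, vecMul_transpose]

lemma two_mul_dotProduct_mulVec_mulVec [CommSemiring R] {P : Matrix ι ι R} (hP : Pᵀ = P)
    (A : Matrix ι ι R) (x : ι → R) :
    2 * (x ⬝ᵥ P *ᵥ A *ᵥ x) = x ⬝ᵥ (Aᵀ * P + P * A) *ᵥ x := by
  have hsymm : x ⬝ᵥ (Aᵀ * P) *ᵥ x = x ⬝ᵥ P *ᵥ A *ᵥ x := by
    rw [← mulVec_mulVec, dotProduct_mulVec, vecMul_transpose, dotProduct_comm,
      dotProduct_mulVec x P, ← mulVec_transpose, hP]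
  rw [add_mulVec, dotProduct_add, hsymm, ← mulVec_mulVec, two_mul]

lemma dotProduct_transpose_inv_mul_mul_inv_mulVec [CommRing R] [DecidableEq ι]
    {S : Matrix ι ι R} (hS : IsUnit S.det) (Q : Matrix ι ι R) (x : ι → R) :
    S *ᵥ x ⬝ᵥ (S⁻¹ᵀ * Q * S⁻¹) *ᵥ S *ᵥ x = x ⬝ᵥ Q *ᵥ x := by
  rw [mulVec_mulVec, mul_assoc, nonsing_inv_mul S hS, mul_one, ← mulVec_mulVec,
    dotProduct_mulVec, vecMul_transpose, mulVec_mulVec, nonsing_inv_mul S hS, one_mulVec]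

open scoped MatrixOrder in
lemma IsHermitian.iInf_eigenvalues_mul_dotProduct_self_le [DecidableEq ι] {M : Matrix ι ι ℝ}
    (hM : M.IsHermitian) (y : ι → ℝ) :
    (⨅ i, hM.eigenvalues i) * (y ⬝ᵥ y) ≤ y ⬝ᵥ M *ᵥ y := by
  have hle : algebraMap ℝ _ (⨅ i, hM.eigenvalues i) ≤ M := by
    refine (algebraMap_le_iff_le_spectrum (ha := hM.isSelfAdjoint)).2 ?_
    rw [hM.spectrum_real_eq_range_eigenvalues]
    rintro _ ⟨i, rfl⟩
    exact ciInf_le (Set.finite_range _).bddBelow i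
  simpa [sub_mulVec, Algebra.algebraMap_eq_smul_one, smul_mulVec, dotProduct_smul] using
    (le_iff.1 hle).dotProduct_mulVec_nonneg y

lemma dotProduct_le_of_sqrt_div_sqrt_le {y z : ι → ℝ} {c : ℝ}
    (h : √(z ⬝ᵥ z) / √(y ⬝ᵥ y) ≤ c) : y ⬝ᵥ z ≤ c * (y ⬝ᵥ y) := by
  rcases eq_or_ne y 0 with rfl | hy0
  · simp
  have hy : 0 < y ⬝ᵥ y :=
    (dotProduct_star_self_nonneg y).lt_of_ne' (dotProduct_self_eq_zero.not.2 hy0)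
  have hcs : y ⬝ᵥ z ≤ √(y ⬝ᵥ y) * √(z ⬝ᵥ z) := by
    simpa [dotProduct, sq] using Real.sum_mul_le_sqrt_mul_sqrt Finset.univ y z
  have hz : √(z ⬝ᵥ z) ≤ c * √(y ⬝ᵥ y) := (div_le_iff₀ (Real.sqrt_pos.2 hy)).1 h
  calc y ⬝ᵥ z ≤ √(y ⬝ᵥ y) * (c * √(y ⬝ᵥ y)) := hcs.trans (by gcongr)
    _ = c * (y ⬝ᵥ y) := by rw [mul_left_comm, Real.mul_self_sqrt hy.le]

end Matrix

lemma lyapunov_decrease_of_mul_self_eq {n : Type*} [Fintype n] [DecidableEq n]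
    {Ak P Qs S : Matrix n n ℝ} (hS : Sᵀ = S) (hSS : S * S = P) (hdet : IsUnit S.det)
    (hLyap : Akᵀ * P + P * Ak = -Qs) (hQhat : (S⁻¹ * Qs * S⁻¹).IsHermitian) (w x : n → ℝ)
    (hsmall : √(w ⬝ᵥ P *ᵥ w) / √(x ⬝ᵥ P *ᵥ x) ≤ (⨅ i, hQhat.eigenvalues i) / 4) :
    2 * (x ⬝ᵥ P *ᵥ (Ak *ᵥ x + w)) ≤ -(1 / 2) * (x ⬝ᵥ Qs *ᵥ x) := by
  have hP_dot (u v : n → ℝ) : u ⬝ᵥ P *ᵥ v = S *ᵥ u ⬝ᵥ S *ᵥ v := by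
    rw [← hSS, ← dotProduct_transpose_mul_mulVec, hS]
  have hQ_ge : (⨅ i, hQhat.eigenvalues i) * (S *ᵥ x ⬝ᵥ S *ᵥ x) ≤ x ⬝ᵥ Qs *ᵥ x := by
    have hSinv : S⁻¹ᵀ = S⁻¹ := by rw [transpose_nonsing_inv, hS]
    rw [← dotProduct_transpose_inv_mul_mul_inv_mulVec hdet Qs x, hSinv]
    exact hQhat.iInf_eigenvalues_mul_dotProduct_self_le _
  have hcross : S *ᵥ x ⬝ᵥ S *ᵥ w ≤ (⨅ i, hQhat.eigenvalues i) / 4 * (S *ᵥ x ⬝ᵥ S *ᵥ x) := by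
    rw [hP_dot, hP_dot] at hsmall
    exact dotProduct_le_of_sqrt_div_sqrt_le hsmall
  have hlin : 2 * (x ⬝ᵥ P *ᵥ Ak *ᵥ x) = -(x ⬝ᵥ Qs *ᵥ x) := by
    have hP : Pᵀ = P := by rw [← hSS, transpose_mul, hS]
    rw [two_mul_dotProduct_mulVec_mulVec hP Ak x, hLyap, neg_mulVec, dotProduct_neg]
  rw [mulVec_add, dotProduct_add, mul_add, hlin, hP_dot x w]
  linarith

theorem lyapunov_decrease_nonlinear_general {n : ℕ}
    (Ak P Qs : Matrix (Fin n) (Fin n) ℝ)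
    (hP : P.PosDef)
    (hLyap : Akᵀ * P + P * Ak = -Qs)
    (hQhat : ((hP.posSemidef.sqrt)⁻¹ * Qs * (hP.posSemidef.sqrt)⁻¹).IsHermitian)
    (φ : (Fin n → ℝ) → (Fin n → ℝ)) (x : Fin n → ℝ)
    (hsmall : Real.sqrt (φ x ⬝ᵥ P.mulVec (φ x)) / Real.sqrt (x ⬝ᵥ P.mulVec x) ≤
      (⨅ i, hQhat.eigenvalues i) / 4) :
    2 * (x ⬝ᵥ P.mulVec (Ak.mulVec x + φ x)) ≤ -(1/2) * (x ⬝ᵥ Qs.mulVec x) :=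
  lyapunov_decrease_of_mul_self_eq hP.posSemidef.isHermitian_sqrt hP.posSemidef.sqrt_mul_self
    ((isUnit_iff_isUnit_det _).1 hP.isUnit_sqrt) hLyap hQhat (φ x) x hsmall

/-- Core inequality of Lemma 1: if the linearization error `φ` is small in the
weighted norm relative to `x`, namely
`‖φ(x)‖_P / ‖x‖_P ≤ λ_min(P^{-1/2} Q* P^{-1/2}) / 4`, then the Lyapunov
derivative of `V(x) = xᵀPx` along `f(x) = A_k x + φ(x)` satisfies
`∇V(x)·f(x) = 2 xᵀ P f(x) ≤ −(1/2) xᵀ Q* x`. -/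
theorem lyapunov_decrease_nonlinear {n : ℕ} [NeZero n]
    (Ak P Qs : Matrix (Fin n) (Fin n) ℝ)
    (hP : P.PosDef) (hQs : Qs.PosDef)
    (hLyap : Akᵀ * P + P * Ak = -Qs)
    (hQhat : ((hP.posSemidef.sqrt)⁻¹ * Qs * (hP.posSemidef.sqrt)⁻¹).IsHermitian)
    (φ : (Fin n → ℝ) → (Fin n → ℝ)) (x : Fin n → ℝ) (hx : x ≠ 0)
    (hsmall : Real.sqrt (φ x ⬝ᵥ P.mulVec (φ x)) / Real.sqrt (x ⬝ᵥ P.mulVec x) ≤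
      (⨅ i, hQhat.eigenvalues i) / 4) :
    2 * (x ⬝ᵥ P.mulVec (Ak.mulVec x + φ x)) ≤ -(1/2) * (x ⬝ᵥ Qs.mulVec x) :=
  lyapunov_decrease_nonlinear_general Ak P Qs hP hLyap hQhat φ x hsmall
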